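/- Let A be a unital alternative *-algebra over ℂ containing a nontrivial symmetric idempotent e satisfying conditions (♠) and (♣), and let Φ : A → A be a map satisfying the *-Jordan n-derivation identity in the last two slots. Then for every a₁₁ ∈ A₁₁, b₁₂ ∈ A₁₂, c₂₁ ∈ A₂₁, d₂₂ ∈ A₂₂ one has Φ(a₁₁ + b₁₂ + c₂₁) = Φ(a₁₁) + Φ(b₁₂) + Φ(c₂₁) and Φ(b₁₂ + c₂₁ + d₂₂) = Φ(b₁₂) + Φ(c₂₁) + Φ(d₂₂). -/

import Mathlib

/-- The Jordan `•`-product `a • b = ab + b a*`. -/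
def starJordan {A : Type*} [NonAssocRing A] [StarRing A] (a b : A) : A :=
  a * b + b * star a

/-- Left-normed iterated Jordan `•`-product of a list (empty list ↦ 0, junk value). -/
def leftStarJordan {A : Type*} [NonAssocRing A] [StarRing A] : List A → A
  | [] => 0
  | x :: xs => xs.foldl starJordan x

/-- The family `a₁ = ⋯ = a_{n-2} = 1`, `a_{n-1} = x`, `a_n = y`. -/
def lastTwoFamily {A : Type*} [One A] (n : ℕ) (x y : A) : Fin n → A :=
  fun i => if (i : ℕ) = n - 2 then x else if (i : ℕ) = n - 1 then y else 1

/-- `e₁ = e`, `e₂ = 1 - e`. -/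
def peirceIdem {A : Type*} [NonAssocRing A] (e : A) : Fin 2 → A :=
  fun i => if i = 0 then e else 1 - e

/-- Membership in the Peirce component `A_{ij}`: `eᵢ x = x` and `x eⱼ = x`. -/
def inPeirce {A : Type*} [NonAssocRing A] (e : A) (i j : Fin 2) (x : A) : Prop :=
  peirceIdem e i * x = x ∧ x * peirceIdem e j = x

/-- The inner derivation `Ξ_{y,z}(a) = y(za) − z(ya) + y(az) − (ya)z + (az)y − (ay)z`. -/
def innerDer {A : Type*} [NonAssocRing A] (y z a : A) : A :=
  y * (z * a) - z * (y * a) + y * (a * z) - (y * a) * z + (a * z) * y - (a * y) * z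

/-!
Put `m = 2 ^ (n - 2)`. With its first `n - 2` arguments equal to `1`, the identity reads
`Φ (m • (x • y)) = (V • x) • y + m • (Φ x • y + x • Φ y)` for a fixed `V`, so the additivity
defect `S = Φ (p + q) - Φ p - Φ q` satisfies
`m • (x • S) = Φ (m • (x • (p + q))) - Φ (m • (x • p)) - Φ (m • (x • q))`, which vanishes as soon
as `x • p = 0` or `x • q = 0`; likewise on the right. The self-adjoint elements `e`, `1 - e` and
`2e - 1` annihilate suitable Peirce components under `•`, and the relations obtained for `S` force
`S = 0`. Division by `2` (and by `m`) is available because `A` is a `ℂ`-module.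
-/

section StarJordan

variable {A : Type*} [NonAssocRing A] [StarRing A]

theorem starJordan_add_left (a b c : A) :
    starJordan (a + b) c = starJordan a c + starJordan b c := by
  simp only [starJordan, add_mul, mul_add, star_add]; abel

theorem starJordan_add_right (a b c : A) :
    starJordan a (b + c) = starJordan a b + starJordan a c := by
  simp only [starJordan, mul_add, add_mul]; abel

theorem starJordan_sub_left (a b c : A) :
    starJordan (a - b) c = starJordan a c - starJordan b c := by
  simp only [starJordan, sub_mul, mul_sub, star_sub]; abel

theorem starJordan_sub_right (a b c : A) :
    starJordan a (b - c) = starJordan a b - starJordan a c := by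
  simp only [starJordan, mul_sub, sub_mul]; abel

@[simp] theorem starJordan_zero_left (a : A) : starJordan 0 a = 0 := by simp [starJordan]

@[simp] theorem starJordan_zero_right (a : A) : starJordan a 0 = 0 := by simp [starJordan]

theorem starJordan_nsmul_left (k : ℕ) (a b : A) :
    starJordan (k • a) b = k • starJordan a b := by
  simp only [starJordan, smul_mul_assoc, mul_smul_comm, star_nsmul, smul_add]

theorem starJordan_sum_left {ι : Type*} (s : Finset ι) (f : ι → A) (b : A) :
    starJordan (∑ i ∈ s, f i) b = ∑ i ∈ s, starJordan (f i) b := by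
  simp only [starJordan, Finset.sum_mul, star_sum, Finset.mul_sum, Finset.sum_add_distrib]

theorem starJordan_one_left (a : A) : starJordan 1 a = 2 • a := by
  rw [starJordan, one_mul, star_one, mul_one, two_nsmul]

theorem starJordan_one_right (a : A) : starJordan a 1 = a + star a := by
  simp [starJordan]

theorem IsSelfAdjoint.starJordan_left {a : A} (ha : IsSelfAdjoint a) (b : A) :
    starJordan a b = a * b + b * a := by
  rw [starJordan, ha.star_eq]

theorem IsSelfAdjoint.starJordan_right {a : A} (ha : IsSelfAdjoint a) (b : A) :
    starJordan b a = b * a + star (b * a) := by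
  rw [starJordan, star_mul, ha.star_eq]

theorem starJordan_one_sub_left (e x : A) : starJordan (1 - e) x = 2 • x - starJordan e x := by
  rw [starJordan_sub_left, starJordan_one_left]

theorem starJordan_two_nsmul_sub_one_eq_zero_iff [IsAddTorsionFree A] (e x : A) :
    starJordan (2 • e - 1) x = 0 ↔ starJordan e x = x := by
  rw [starJordan_sub_left, starJordan_nsmul_left, starJordan_one_left, ← smul_sub,
    nsmul_eq_zero_iff_right two_ne_zero, sub_eq_zero]

end StarJordan

section Peirce

variable {A : Type*} [NonAssocRing A]

theorem inPeirce_zero_zero_iff {e x : A} : inPeirce e 0 0 x ↔ e * x = x ∧ x * e = x := by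
  simp [inPeirce, peirceIdem]

theorem inPeirce_zero_one_iff {e x : A} : inPeirce e 0 1 x ↔ e * x = x ∧ x * e = 0 := by
  simp [inPeirce, peirceIdem, mul_sub]

theorem inPeirce_one_zero_iff {e x : A} : inPeirce e 1 0 x ↔ e * x = 0 ∧ x * e = x := by
  simp [inPeirce, peirceIdem, sub_mul]

theorem inPeirce_one_one_iff {e x : A} : inPeirce e 1 1 x ↔ e * x = 0 ∧ x * e = 0 := by
  simp [inPeirce, peirceIdem, sub_mul, mul_sub]

variable [StarRing A] {e x : A}

theorem starJordan_eq_two_nsmul_of_inPeirce_zero_zero (he : IsSelfAdjoint e)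
    (hx : inPeirce e 0 0 x) : starJordan e x = 2 • x := by
  obtain ⟨h₁, h₂⟩ := inPeirce_zero_zero_iff.mp hx
  rw [he.starJordan_left, h₁, h₂, two_nsmul]

theorem starJordan_eq_self_of_inPeirce_zero_one (he : IsSelfAdjoint e)
    (hx : inPeirce e 0 1 x) : starJordan e x = x := by
  obtain ⟨h₁, h₂⟩ := inPeirce_zero_one_iff.mp hx
  rw [he.starJordan_left, h₁, h₂, add_zero]

theorem starJordan_eq_self_of_inPeirce_one_zero (he : IsSelfAdjoint e)
    (hx : inPeirce e 1 0 x) : starJordan e x = x := by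
  obtain ⟨h₁, h₂⟩ := inPeirce_one_zero_iff.mp hx
  rw [he.starJordan_left, h₁, h₂, zero_add]

theorem starJordan_eq_zero_of_inPeirce_one_one (he : IsSelfAdjoint e)
    (hx : inPeirce e 1 1 x) : starJordan e x = 0 := by
  obtain ⟨h₁, h₂⟩ := inPeirce_one_one_iff.mp hx
  rw [he.starJordan_left, h₁, h₂, add_zero]

theorem starJordan_right_eq_zero_of_inPeirce_zero_one (he : IsSelfAdjoint e)
    (hx : inPeirce e 0 1 x) : starJordan x e = 0 := by
  rw [he.starJordan_right, (inPeirce_zero_one_iff.mp hx).2, star_zero, add_zero]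

theorem starJordan_one_sub_right_eq_zero_of_inPeirce_one_zero (he : IsSelfAdjoint e)
    (hx : inPeirce e 1 0 x) : starJordan x (1 - e) = 0 := by
  rw [((IsSelfAdjoint.one A).sub he).starJordan_right, mul_sub, mul_one,
    (inPeirce_one_zero_iff.mp hx).2, sub_self, star_zero, add_zero]

theorem eq_zero_of_starJordan_eq_zero_of_starJordan_eq_self {T : A} (he : IsSelfAdjoint e)
    (hee : e * (e * T) = e * T) (h₁ : starJordan T e = 0) (h₂ : starJordan T (1 - e) = 0)
    (h₃ : starJordan e T = T) : T = 0 := by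
  have hskew : star T = -T := by
    have h : starJordan T (e + (1 - e)) = 0 := by
      rw [starJordan_add_right, h₁, h₂, add_zero]
    rw [add_sub_cancel, starJordan_one_right] at h
    exact eq_neg_of_add_eq_zero_right h
  have hcomm : T * e = e * T := by
    rwa [starJordan, hskew, mul_neg, add_neg_eq_zero] at h₁
  rw [he.starJordan_left, hcomm] at h₃
  have heT : e * T = T := by
    calc e * T = e * (e * T + e * T) := by rw [h₃]
      _ = T := by rw [mul_add, hee, h₃]
  rw [heT] at h₃
  exact add_eq_left.mp h₃

end Peirce

section LeftStarJordan

variable {A : Type*} [NonAssocRing A] [StarRing A]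

theorem leftStarJordan_append_singleton {l : List A} (hl : l ≠ []) (x : A) :
    leftStarJordan (l ++ [x]) = starJordan (leftStarJordan l) x := by
  obtain ⟨a, l, rfl⟩ := List.exists_cons_of_ne_nil hl
  simp [leftStarJordan]

theorem leftStarJordan_append_pair {l : List A} (hl : l ≠ []) (x y : A) :
    leftStarJordan (l ++ [x, y]) = starJordan (starJordan (leftStarJordan l) x) y := by
  rw [show l ++ [x, y] = l ++ [x] ++ [y] by simp, leftStarJordan_append_singleton (by simp),
    leftStarJordan_append_singleton hl]

theorem leftStarJordan_replicate_one (s : ℕ) :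
    leftStarJordan (List.replicate (s + 1) (1 : A)) = 2 ^ s • 1 := by
  induction s with
  | zero => simp [leftStarJordan]
  | succ s ih =>
    rw [List.replicate_succ', leftStarJordan_append_singleton (by simp), ih,
      starJordan_nsmul_left, starJordan_one_left, smul_smul, pow_succ]

theorem leftStarJordan_replicate_one_append_pair (s : ℕ) (x y : A) :
    leftStarJordan (List.replicate s 1 ++ [x, y]) = 2 ^ s • starJordan x y := by
  cases s with
  | zero => simp [leftStarJordan]
  | succ s =>
    rw [leftStarJordan_append_pair (by simp), leftStarJordan_replicate_one, starJordan_nsmul_left,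
      starJordan_one_left, smul_smul, starJordan_nsmul_left, pow_succ]

end LeftStarJordan

theorem List.ofFn_update {α : Type*} {n : ℕ} (f : Fin n → α) (k : Fin n) (v : α) :
    List.ofFn (Function.update f k v) = (List.ofFn f).set k v :=
  List.ext_getElem (by simp) fun i _ _ => by
    simp [Function.update_apply, List.getElem_set, Fin.ext_iff, eq_comm]

section LastTwoFamily

variable {A : Type*} [One A] (s : ℕ) (x y : A)

theorem ofFn_lastTwoFamily :
    List.ofFn (lastTwoFamily (s + 2) x y) = List.replicate s 1 ++ [x, y] :=
  List.ext_getElem (by simp) fun i hi _ => by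
    rw [List.length_ofFn] at hi
    simp only [List.getElem_ofFn, lastTwoFamily, List.getElem_append, List.length_replicate,
      List.getElem_replicate, Nat.add_sub_cancel]
    split_ifs <;> first | rfl | omega | (subst_vars; simp)

theorem lastTwoFamily_castSucc_castSucc (i : Fin s) :
    lastTwoFamily (s + 2) x y i.castSucc.castSucc = 1 := by
  simp [lastTwoFamily, i.isLt.ne, (i.isLt.trans (Nat.lt_succ_self s)).ne]

theorem lastTwoFamily_castSucc_last : lastTwoFamily (s + 2) x y (Fin.last s).castSucc = x := by
  simp [lastTwoFamily]

theorem lastTwoFamily_last : lastTwoFamily (s + 2) x y (Fin.last (s + 1)) = y := by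
  simp [lastTwoFamily]

end LastTwoFamily

def addDefect {A : Type*} [AddCommGroup A] (Φ : A → A) (p q : A) : A := Φ (p + q) - Φ p - Φ q

theorem addDefect_eq_zero_iff {A : Type*} [AddCommGroup A] {Φ : A → A} {p q : A} :
    addDefect Φ p q = 0 ↔ Φ (p + q) = Φ p + Φ q := by
  rw [addDefect, sub_sub, sub_eq_zero]

section ScaledDerivation

variable {A : Type*} [NonAssocRing A] [StarRing A]

def IsScaledStarJordanDerivation (Φ : A → A) (m : ℕ) (V : A) : Prop :=
  ∀ x y, Φ (m • starJordan x y) =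
    starJordan (starJordan V x) y + m • starJordan (Φ x) y + m • starJordan x (Φ y)

theorem exists_isScaledStarJordanDerivation {Φ : A → A} {s : ℕ}
    (hΦ : ∀ x y : A,
      Φ (leftStarJordan (List.ofFn (lastTwoFamily (s + 2) x y))) =
        ∑ k : Fin (s + 2), leftStarJordan (List.ofFn
          (Function.update (lastTwoFamily (s + 2) x y) k (Φ (lastTwoFamily (s + 2) x y k))))) :
    ∃ V, IsScaledStarJordanDerivation Φ (2 ^ s) V := by
  -- `V` collects the summands in which `Φ` hits one of the leading `1`s.
  refine ⟨∑ k : Fin s, leftStarJordan ((List.replicate s 1).set k (Φ 1)), fun x y => ?_⟩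
  have hset (k : Fin s) : (List.replicate s (1 : A)).set k (Φ 1) ≠ [] :=
    List.ne_nil_of_length_pos (by simp [k.pos])
  rw [← leftStarJordan_replicate_one_append_pair, ← ofFn_lastTwoFamily, hΦ,
    Fin.sum_univ_castSucc, Fin.sum_univ_castSucc]
  simp only [List.ofFn_update, ofFn_lastTwoFamily, lastTwoFamily_castSucc_castSucc,
    lastTwoFamily_castSucc_last, lastTwoFamily_last, Fin.val_castSucc, Fin.val_last,
    List.set_append, List.length_replicate, Fin.is_lt, if_true, lt_irrefl, if_false,
    Nat.sub_self, not_lt.mpr (Nat.le_succ s), Nat.add_sub_cancel_left, List.set_cons_zero,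
    List.set_cons_succ, leftStarJordan_replicate_one_append_pair,
    leftStarJordan_append_pair (hset _), starJordan_sum_left]

namespace IsScaledStarJordanDerivation

variable {Φ : A → A} {m : ℕ} {V : A}

theorem map_zero (hΦ : IsScaledStarJordanDerivation Φ m V) : Φ 0 = 0 := by
  simpa using hΦ 0 0

theorem smul_starJordan_addDefect_right (hΦ : IsScaledStarJordanDerivation Φ m V) (x p q : A) :
    m • starJordan x (addDefect Φ p q) =
      Φ (m • starJordan x (p + q)) - Φ (m • starJordan x p) - Φ (m • starJordan x q) := by
  rw [hΦ, hΦ, hΦ]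
  simp only [addDefect, starJordan_add_right, starJordan_sub_right, smul_sub, smul_add]
  abel

theorem smul_starJordan_addDefect_left (hΦ : IsScaledStarJordanDerivation Φ m V) (p q y : A) :
    m • starJordan (addDefect Φ p q) y =
      Φ (m • starJordan (p + q) y) - Φ (m • starJordan p y) - Φ (m • starJordan q y) := by
  rw [hΦ, hΦ, hΦ]
  simp only [addDefect, starJordan_add_left, starJordan_add_right, starJordan_sub_left,
    smul_sub, smul_add]
  abel

variable [IsAddTorsionFree A]

theorem starJordan_addDefect_right_eq_zero (hΦ : IsScaledStarJordanDerivation Φ m V)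
    (hm : m ≠ 0) {x p q : A} (h : starJordan x p = 0 ∨ starJordan x q = 0) :
    starJordan x (addDefect Φ p q) = 0 := by
  rw [← nsmul_eq_zero_iff_right hm, hΦ.smul_starJordan_addDefect_right]
  rcases h with h | h <;> simp [h, starJordan_add_right, hΦ.map_zero]

theorem starJordan_addDefect_left_eq_zero (hΦ : IsScaledStarJordanDerivation Φ m V)
    (hm : m ≠ 0) {p q y : A} (h : starJordan p y = 0 ∨ starJordan q y = 0) :
    starJordan (addDefect Φ p q) y = 0 := by
  rw [← nsmul_eq_zero_iff_right hm, hΦ.smul_starJordan_addDefect_left]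
  rcases h with h | h <;> simp [h, starJordan_add_left, hΦ.map_zero]

variable {e : A}

theorem map_add_of_starJordan_eq_self (hΦ : IsScaledStarJordanDerivation Φ m V) (hm : m ≠ 0)
    {q p : A} (hq : starJordan e q = q) (hp : starJordan e p = 0 ∨ starJordan e p = 2 • p) :
    Φ (q + p) = Φ q + Φ p := by
  rw [← addDefect_eq_zero_iff]
  have hS : starJordan e (addDefect Φ q p) = addDefect Φ q p :=
    (starJordan_two_nsmul_sub_one_eq_zero_iff e _).mp <| hΦ.starJordan_addDefect_right_eq_zero hm
      (.inl <| (starJordan_two_nsmul_sub_one_eq_zero_iff e q).mpr hq)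
  rcases hp with hp | hp
  · rw [← hS]
    exact hΦ.starJordan_addDefect_right_eq_zero hm (.inr hp)
  · have h := hΦ.starJordan_addDefect_right_eq_zero (x := 1 - e) (p := q) hm
      (.inr <| by rw [starJordan_one_sub_left, hp, sub_self])
    rwa [starJordan_one_sub_left, hS, two_nsmul, add_sub_cancel_right] at h

theorem map_add_of_inPeirce_zero_one_of_inPeirce_one_zero
    (hΦ : IsScaledStarJordanDerivation Φ m V) (hm : m ≠ 0) (he : IsSelfAdjoint e)
    (hee : ∀ x, e * (e * x) = e * x) {b c : A} (hb : inPeirce e 0 1 b) (hc : inPeirce e 1 0 c) :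
    Φ (b + c) = Φ b + Φ c := by
  rw [← addDefect_eq_zero_iff]
  refine eq_zero_of_starJordan_eq_zero_of_starJordan_eq_self he (hee _) ?_ ?_ ?_
  · exact hΦ.starJordan_addDefect_left_eq_zero hm
      (.inl <| starJordan_right_eq_zero_of_inPeirce_zero_one he hb)
  · exact hΦ.starJordan_addDefect_left_eq_zero hm
      (.inr <| starJordan_one_sub_right_eq_zero_of_inPeirce_one_zero he hc)
  · rw [← starJordan_two_nsmul_sub_one_eq_zero_iff]
    exact hΦ.starJordan_addDefect_right_eq_zero hm <| .inl <|
      (starJordan_two_nsmul_sub_one_eq_zero_iff e b).mpr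
        (starJordan_eq_self_of_inPeirce_zero_one he hb)

end IsScaledStarJordanDerivation

end ScaledDerivation

theorem stmt_4_general {A : Type*} [NonAssocRing A] [Module ℂ A] [StarRing A]
    (halt₁ : ∀ a b : A, a * a * b = a * (a * b))
    (e : A) (heStar : star e = e) (heIdem : e * e = e)
    (n : ℕ) (hn : 2 ≤ n) (Φ : A → A)
    (hΦ : ∀ x y : A,
      Φ (leftStarJordan (List.ofFn (lastTwoFamily n x y))) =
        ∑ k : Fin n, leftStarJordan (List.ofFn
          (Function.update (lastTwoFamily n x y) k (Φ (lastTwoFamily n x y k))))) :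
    ∀ a b c d : A, inPeirce e 0 0 a → inPeirce e 0 1 b →
      inPeirce e 1 0 c → inPeirce e 1 1 d →
      Φ (a + b + c) = Φ a + Φ b + Φ c ∧ Φ (b + c + d) = Φ b + Φ c + Φ d := by
  intro a b c d ha hb hc hd
  have : IsAddTorsionFree A := .of_isTorsionFree ℂ A
  obtain ⟨s, rfl⟩ : ∃ s, n = s + 2 := ⟨n - 2, by omega⟩
  obtain ⟨V, hV⟩ := exists_isScaledStarJordanDerivation hΦ
  have hm : 2 ^ s ≠ 0 := pow_ne_zero s two_ne_zero
  have hee (x : A) : e * (e * x) = e * x := by rw [← halt₁, heIdem]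
  have hbc : Φ (b + c) = Φ b + Φ c :=
    hV.map_add_of_inPeirce_zero_one_of_inPeirce_one_zero hm heStar hee hb hc
  have hebc : starJordan e (b + c) = b + c := by
    rw [starJordan_add_right, starJordan_eq_self_of_inPeirce_zero_one heStar hb,
      starJordan_eq_self_of_inPeirce_one_zero heStar hc]
  constructor
  · rw [add_assoc, add_comm a, hV.map_add_of_starJordan_eq_self hm hebc
      (.inr (starJordan_eq_two_nsmul_of_inPeirce_zero_zero heStar ha)), hbc]
    abel
  · rw [hV.map_add_of_starJordan_eq_self hm hebc
      (.inl (starJordan_eq_zero_of_inPeirce_one_one heStar hd)), hbc]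

theorem stmt_4 {A : Type*} [NonAssocRing A] [Module ℂ A]
    [SMulCommClass ℂ A A] [IsScalarTower ℂ A A] [StarRing A]
    (halt₁ : ∀ a b : A, a * a * b = a * (a * b))
    (halt₂ : ∀ a b : A, b * a * a = b * (a * a))
    (e : A) (heStar : star e = e) (heIdem : e * e = e) (he0 : e ≠ 0) (he1 : e ≠ 1)
    (hsp : ∀ x : A, (∀ r : A, x * r * e = 0) → x = 0)
    (hcl : ∀ x : A, (∀ r : A, x * r * (1 - e) = 0) → x = 0)
    (n : ℕ) (hn : 2 ≤ n) (Φ : A → A)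
    (hΦ : ∀ x y : A,
      Φ (leftStarJordan (List.ofFn (lastTwoFamily n x y))) =
        ∑ k : Fin n, leftStarJordan (List.ofFn
          (Function.update (lastTwoFamily n x y) k (Φ (lastTwoFamily n x y k))))) :
    ∀ a b c d : A, inPeirce e 0 0 a → inPeirce e 0 1 b →
      inPeirce e 1 0 c → inPeirce e 1 1 d →
      Φ (a + b + c) = Φ a + Φ b + Φ c ∧ Φ (b + c + d) = Φ b + Φ c + Φ d :=
  stmt_4_general halt₁ e heStar heIdem n hn Φ hΦ
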